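/- (Relaxed sufficient conditions for Picard convergence in stable inversion.) Assume: (A1) the initial iterate satisfies ‖η_{(0)}‖_{∞,1} ≤ s; (A2) for every k there exists ŷ†(k) ∈ ℝ^{μ+1} with f̃(0, ŷ†(k), k) = 0; (A3) f̃ is locally approximately linear on the closed s-neighborhood with constants K₁, K₂ > 0; (A4) K₁‖φ‖_{∞,1} < 1 with ‖φ‖_{∞,1} < ∞; (A5) ‖φ‖_{∞,1}·K₂·Σ_{k∈ℤ}‖f̃(0, ŷ(k), k)‖_∞ / (1 − ‖φ‖_{∞,1}K₁) ≤ s, where Σ_{k∈ℤ}‖f̃(0, ŷ(k), k)‖_∞ < ∞ and ‖f̃(0, ŷ(k), k)‖_∞ ≤ s for all k. Then every Picard iterate satisfies ‖η_{(m)}‖_{∞,1} ≤ s; for every k ∈ ℤ the sequence (η_{(m)}(k))_{m≥0} is Cauchy and hence converges in ℝ^n; and the pointwise limit η := lim_{m→∞} η_{(m)} is the unique sequence with ‖η‖_{∞,1} ≤ s satisfying the fixed-point equation η(k) = Σ_{j∈ℤ} φ(k−j)·( f̃(η(j−1), ŷ(j−1), j−1) − Ã·η(j−1) ) for all k. -/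

import Mathlib

/-!
Write the iteration as `η ↦ P η := φ ∗ (F ∘ η)` with `F j x = f̃(x, ŷ j, j) - Ã x` (the
convolution delayed by one step). On the closed `s`-ball of `ℓ¹(ℤ; ℝⁿ)`, (A2)–(A3) give
`‖F j x‖ ≤ K₁‖x‖ + K₂‖f̃(0, ŷ j, j)‖` and `‖F j x - F j y‖ ≤ K₁‖x - y‖`, so by Young's
inequality `‖φ ∗ g‖₁ ≤ ‖φ‖₁‖g‖₁` and (A5) `P` maps the ball into itself, and by (A4) it is a
contraction there with constant `K₁‖φ‖₁ < 1`. The ball is complete, so Banach's fixed point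
theorem gives convergence of the iterates in `ℓ¹` (hence pointwise) to the unique fixed point.
-/

open Matrix

noncomputable section

/-- The matrix sequence `φ : ℤ → ℝ^{n×n}` of the stable inversion theory. -/
def stabPhi {ns nu : ℕ} (As : Matrix (Fin ns) (Fin ns) ℝ)
    (Au : Matrix (Fin nu) (Fin nu) ℝ) :
    ℤ → Matrix (Fin ns ⊕ Fin nu) (Fin ns ⊕ Fin nu) ℝ := fun k =>
  if 0 < k then Matrix.fromBlocks (As ^ k.toNat) 0 0 0
  else if k = 0 then Matrix.fromBlocks 1 0 0 0
  else Matrix.fromBlocks 0 0 0 (-(Au⁻¹ ^ (-k).toNat))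

/-- The operator norm induced by the vector `∞`-norm: the maximum absolute row sum. -/
def rowSumNorm {m n : Type*} [Fintype m] [Fintype n] (M : Matrix m n ℝ) : ℝ :=
  ⨆ i, ∑ j, |M i j|

open Filter Topology

section RowSumNorm

variable {m n : Type*} [Fintype m] [Fintype n]

lemma sum_abs_le_rowSumNorm (M : Matrix m n ℝ) (i : m) : ∑ j, |M i j| ≤ rowSumNorm M :=
  le_ciSup (f := fun i => ∑ j, |M i j|) (Set.finite_range _).bddAbove i

lemma rowSumNorm_nonneg (M : Matrix m n ℝ) : 0 ≤ rowSumNorm M :=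
  Real.iSup_nonneg fun _ => Finset.sum_nonneg fun _ _ => abs_nonneg _

lemma norm_mulVec_le_rowSumNorm_mul (M : Matrix m n ℝ) (v : n → ℝ) :
    ‖M *ᵥ v‖ ≤ rowSumNorm M * ‖v‖ := by
  refine (pi_norm_le_iff_of_nonneg (mul_nonneg (rowSumNorm_nonneg M) (norm_nonneg v))).2
    fun i => ?_
  calc ‖(M *ᵥ v) i‖ ≤ ∑ j, |M i j| * ‖v‖ := by
        rw [mulVec, dotProduct, Real.norm_eq_abs]
        refine (Finset.abs_sum_le_sum_abs _ _).trans (Finset.sum_le_sum fun j _ => ?_)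
        rw [abs_mul, ← Real.norm_eq_abs (v j)]
        exact mul_le_mul_of_nonneg_left (norm_le_pi_norm v j) (abs_nonneg _)
    _ ≤ rowSumNorm M * ‖v‖ := by
        rw [← Finset.sum_mul]
        exact mul_le_mul_of_nonneg_right (sum_abs_le_rowSumNorm M i) (norm_nonneg v)

end RowSumNorm

section Convolution

variable {G : Type*} [AddGroup G] {a c : G → ℝ}

def convolutionReindex (d : G) : G × G ≃ G × G where
  toFun p := (p.1 - p.2, p.2 - d)
  invFun p := (p.1 + (p.2 + d), p.2 + d)
  left_inv p := by simp
  right_inv p := by simp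

lemma summable_mul_sub_sub (ha : Summable a) (hc : Summable c) (ha0 : 0 ≤ a) (hc0 : 0 ≤ c)
    (d : G) : Summable fun p : G × G => a (p.1 - p.2) * c (p.2 - d) :=
  (convolutionReindex d).summable_iff.2 (ha.mul_of_nonneg hc ha0 hc0)

lemma tsum_tsum_mul_sub_sub (ha : Summable a) (hc : Summable c) (ha0 : 0 ≤ a) (hc0 : 0 ≤ c)
    (d : G) : ∑' k, ∑' j, a (k - j) * c (j - d) = (∑' k, a k) * ∑' j, c j := by
  have h := summable_mul_sub_sub ha hc ha0 hc0 d
  rw [← h.tsum_prod' h.prod_factor, ha.tsum_mul_tsum hc (ha.mul_of_nonneg hc ha0 hc0)]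
  exact (convolutionReindex d).tsum_eq fun q => a q.1 * c q.2

end Convolution

def MemL1Ball {E : Type*} [NormedAddCommGroup E] (s : ℝ) (η : ℤ → E) : Prop :=
  Summable (fun k => ‖η k‖) ∧ ∑' k, ‖η k‖ ≤ s

namespace MemL1Ball

variable {E : Type*} [NormedAddCommGroup E] {r s : ℝ} {η ζ : ℤ → E}

lemma norm_le (h : MemL1Ball s η) (k : ℤ) : ‖η k‖ ≤ s :=
  (h.1.le_tsum k fun _ _ => norm_nonneg _).trans h.2

lemma mono (h : MemL1Ball r η) (hrs : r ≤ s) : MemL1Ball s η :=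
  ⟨h.1, h.2.trans hrs⟩

lemma of_norm_le {b : ℤ → ℝ} (hb : Summable b) (hηb : ∀ k, ‖η k‖ ≤ b k) :
    MemL1Ball (∑' k, b k) η :=
  have hη : Summable fun k => ‖η k‖ := .of_nonneg_of_le (fun _ => norm_nonneg _) hηb hb
  ⟨hη, hη.tsum_le_tsum hηb hb⟩

lemma sub (hη : MemL1Ball r η) (hζ : MemL1Ball s ζ) :
    MemL1Ball (∑' k, ‖η k - ζ k‖) (η - ζ) :=
  ⟨.of_nonneg_of_le (fun _ => norm_nonneg _) (fun _ => norm_sub_le _ _) (hη.1.add hζ.1), le_rfl⟩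

end MemL1Ball

section DelayedConvolution

variable {ι : Type*} [Fintype ι] {φ : ℤ → Matrix ι ι ℝ} {g h : ℤ → ι → ℝ}

variable (φ) in
def delayConv (g : ℤ → ι → ℝ) (k : ℤ) : ι → ℝ :=
  ∑' j, φ (k - j) *ᵥ g (j - 1)

lemma summable_rowSumNorm_mul_norm_delay (hφ : Summable fun k => rowSumNorm (φ k))
    (hg : Summable fun j => ‖g j‖) :
    Summable fun p : ℤ × ℤ => rowSumNorm (φ (p.1 - p.2)) * ‖g (p.2 - 1)‖ :=
  summable_mul_sub_sub hφ hg (fun _ => rowSumNorm_nonneg _) (fun _ => norm_nonneg _) 1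

lemma summable_delayConv_terms (hφ : Summable fun k => rowSumNorm (φ k))
    (hg : Summable fun j => ‖g j‖) (k : ℤ) : Summable fun j => φ (k - j) *ᵥ g (j - 1) :=
  .of_norm_bounded ((summable_rowSumNorm_mul_norm_delay hφ hg).prod_factor k)
    fun _ => norm_mulVec_le_rowSumNorm_mul _ _

lemma norm_delayConv_le (hφ : Summable fun k => rowSumNorm (φ k))
    (hg : Summable fun j => ‖g j‖) (k : ℤ) :
    ‖delayConv φ g k‖ ≤ ∑' j, rowSumNorm (φ (k - j)) * ‖g (j - 1)‖ :=
  tsum_of_norm_bounded ((summable_rowSumNorm_mul_norm_delay hφ hg).prod_factor k).hasSum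
    fun _ => norm_mulVec_le_rowSumNorm_mul _ _

lemma delayConv_sub (hφ : Summable fun k => rowSumNorm (φ k))
    (hg : Summable fun j => ‖g j‖) (hh : Summable fun j => ‖h j‖) :
    delayConv φ g - delayConv φ h = delayConv φ (g - h) := by
  funext k
  simp only [Pi.sub_apply, delayConv, mulVec_sub]
  exact ((summable_delayConv_terms hφ hg k).tsum_sub (summable_delayConv_terms hφ hh k)).symm

/-- Young's inequality `‖φ ∗ g‖₁ ≤ ‖φ‖₁ ‖g‖₁`. -/
lemma MemL1Ball.delayConv {r : ℝ} (hφ : Summable fun k => rowSumNorm (φ k))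
    (hg : MemL1Ball r g) : MemL1Ball ((∑' k, rowSumNorm (φ k)) * r) (delayConv φ g) := by
  have hprod := summable_rowSumNorm_mul_norm_delay hφ hg.1
  refine (MemL1Ball.of_norm_le hprod.prod (norm_delayConv_le hφ hg.1)).mono ?_
  rw [tsum_tsum_mul_sub_sub hφ hg.1 (fun _ => rowSumNorm_nonneg _) (fun _ => norm_nonneg _)]
  exact mul_le_mul_of_nonneg_left hg.2 (tsum_nonneg fun _ => rowSumNorm_nonneg _)

end DelayedConvolution

section Nemytskii

variable {E E' : Type*} [NormedAddCommGroup E] [NormedAddCommGroup E'] {F : ℤ → E → E'}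
  {s K : ℝ} {η ζ : ℤ → E}

lemma MemL1Ball.comp_of_norm_le {b : ℤ → ℝ} (hK : 0 ≤ K) (hb : Summable b)
    (hF : ∀ j x, ‖x‖ ≤ s → ‖F j x‖ ≤ K * ‖x‖ + b j) (hη : MemL1Ball s η) :
    MemL1Ball (K * s + ∑' j, b j) fun j => F j (η j) := by
  refine (MemL1Ball.of_norm_le ((hη.1.mul_left K).add hb)
    fun j => hF j _ (hη.norm_le j)).mono ?_
  rw [(hη.1.mul_left K).tsum_add hb, tsum_mul_left]
  gcongr
  exact hη.2

lemma MemL1Ball.comp_sub_comp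
    (hF : ∀ j x y, ‖x‖ ≤ s → ‖y‖ ≤ s → ‖F j x - F j y‖ ≤ K * ‖x - y‖)
    (hη : MemL1Ball s η) (hζ : MemL1Ball s ζ) :
    MemL1Ball (K * ∑' j, ‖η j - ζ j‖) ((fun j => F j (η j)) - fun j => F j (ζ j)) := by
  have h := MemL1Ball.of_norm_le ((hη.sub hζ).1.mul_left K)
    fun j => hF j _ _ (hη.norm_le j) (hζ.norm_le j)
  rwa [tsum_mul_left] at h

end Nemytskii

lemma memℓp_one_iff {α : Type*} {E : α → Type*} [∀ i, NormedAddCommGroup (E i)] {f : ∀ i, E i} :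
    Memℓp f 1 ↔ Summable fun i => ‖f i‖ := by
  simp [memℓp_gen_iff (p := 1) (by simp)]

lemma lp.norm_eq_tsum_norm {α : Type*} {E : α → Type*} [∀ i, NormedAddCommGroup (E i)]
    (f : lp E 1) : ‖f‖ = ∑' i, ‖f i‖ := by
  simp [lp.norm_eq_tsum_rpow (p := 1) (by simp)]

theorem picard_iteration_converges_of_contracting {E : Type*} [NormedAddCommGroup E]
    [CompleteSpace E] {P : (ℤ → E) → ℤ → E} {s q : ℝ} (hq0 : 0 ≤ q) (hq : q < 1)
    (hmaps : ∀ η, MemL1Ball s η → MemL1Ball s (P η))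
    (hcontr : ∀ η ζ, MemL1Ball s η → MemL1Ball s ζ →
      MemL1Ball (q * ∑' k, ‖η k - ζ k‖) (P η - P ζ))
    {η : ℕ → ℤ → E} (h0 : MemL1Ball s (η 0)) (hstep : ∀ m, η (m + 1) = P (η m)) :
    (∀ m, MemL1Ball s (η m)) ∧ (∀ k, CauchySeq fun m => η m k) ∧
    ∃ ηlim : ℤ → E, (∀ k, Tendsto (fun m => η m k) atTop (𝓝 (ηlim k))) ∧
      MemL1Ball s ηlim ∧ (∀ k, ηlim k = P ηlim k) ∧
      ∀ ζ, MemL1Ball s ζ → (∀ k, ζ k = P ζ k) → ζ = ηlim := by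
  let B := Metric.closedBall (0 : lp (fun _ : ℤ => E) 1) s
  have hB (x : B) : MemL1Ball s ⇑(x : lp (fun _ : ℤ => E) 1) :=
    ⟨memℓp_one_iff.1 (x : lp (fun _ : ℤ => E) 1).2, by
      rw [← lp.norm_eq_tsum_norm]; exact mem_closedBall_zero_iff.1 x.2⟩
  let toB (ζ : ℤ → E) (hζ : MemL1Ball s ζ) : B :=
    ⟨⟨ζ, memℓp_one_iff.2 hζ.1⟩, by
      rw [mem_closedBall_zero_iff, lp.norm_eq_tsum_norm]; exact hζ.2⟩
  let T : B → B := fun x => toB (P x) (hmaps _ (hB x))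
  have hT : ContractingWith ⟨q, hq0⟩ T := by
    refine ⟨hq, LipschitzWith.of_dist_le_mul fun x y => ?_⟩
    simp only [Subtype.dist_eq, dist_eq_norm, lp.norm_eq_tsum_norm, lp.coeFn_sub, Pi.sub_apply]
    exact (hcontr _ _ (hB x) (hB y)).2
  have hiter (m : ℕ) : ⇑(T^[m] (toB _ h0) : lp (fun _ : ℤ => E) 1) = η m := by
    induction m with
    | zero => rfl
    | succ m ih => rw [Function.iterate_succ_apply', hstep, ← ih]
  have : Nonempty B := ⟨toB _ h0⟩
  have : IsClosed (B : Set (lp (fun _ : ℤ => E) 1)) := Metric.isClosed_closedBall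
  set ξ : lp (fun _ : ℤ => E) 1 := (ContractingWith.fixedPoint T hT).1
  have htend (k : ℤ) : Tendsto (fun m => η m k) atTop (𝓝 (ξ k)) := by
    have h := ((lp.lipschitzWith_one_eval 1 k).continuous.comp continuous_subtype_val).tendsto
      (ContractingWith.fixedPoint T hT) |>.comp (hT.tendsto_iterate_fixedPoint (toB _ h0))
    simpa only [Function.comp_def, hiter] using h
  refine ⟨fun m => hiter m ▸ hB _, fun k => (htend k).cauchySeq, ξ, htend, hB _,
    fun k => ?_, fun ζ hζ hfix => ?_⟩
  · exact congrFun (congrArg (fun x : B => ⇑(x : lp (fun _ : ℤ => E) 1))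
      hT.fixedPoint_isFixedPt.symm) k
  · have hζfix : Function.IsFixedPt T (toB ζ hζ) := Subtype.ext (lp.ext (funext hfix).symm)
    exact congrArg (fun x : B => ⇑(x : lp (fun _ : ℤ => E) 1)) (hT.fixedPoint_unique hζfix)

theorem picard_iteration_converges_uniquely_general
    (ns nu μ : ℕ)
    (As : Matrix (Fin ns) (Fin ns) ℝ) (Au : Matrix (Fin nu) (Fin nu) ℝ)
    (Atil : Matrix (Fin ns ⊕ Fin nu) (Fin ns ⊕ Fin nu) ℝ)
    (ftil : (Fin ns ⊕ Fin nu → ℝ) → (Fin (μ+1) → ℝ) → ℤ → (Fin ns ⊕ Fin nu → ℝ))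
    (yhat : ℤ → (Fin (μ+1) → ℝ))
    (s K₁ K₂ : ℝ) (hs : 0 < s) (hK₁ : 0 < K₁)
    -- (A2) for every k there is ŷ†(k) with f̃(0, ŷ†(k), k) = 0
    (hdag : ∀ k : ℤ, ∃ ydag : Fin (μ+1) → ℝ, ftil 0 ydag k = 0)
    -- (A3) local approximate linearity on the closed s-neighborhood
    (hLAL : ∀ (k : ℤ) (a b : Fin ns ⊕ Fin nu → ℝ) (ya yb : Fin (μ+1) → ℝ),
      ‖a‖ ≤ s → ‖b‖ ≤ s → ‖ftil 0 ya k‖ ≤ s → ‖ftil 0 yb k‖ ≤ s →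
      ‖(ftil a ya k - Atil.mulVec a) - (ftil b yb k - Atil.mulVec b)‖
        ≤ K₁ * ‖a - b‖ + K₂ * ‖ftil 0 ya k - ftil 0 yb k‖)
    -- (A4) K₁‖φ‖_{∞,1} < 1 with ‖φ‖_{∞,1} < ∞
    (hφsum : Summable fun k : ℤ => rowSumNorm (stabPhi As Au k))
    (hcontr : K₁ * (∑' k : ℤ, rowSumNorm (stabPhi As Au k)) < 1)
    -- (A5) the ball condition
    (hfbnd : ∀ k : ℤ, ‖ftil 0 (yhat k) k‖ ≤ s)
    (hfsum : Summable fun k : ℤ => ‖ftil 0 (yhat k) k‖)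
    (hball : (∑' k : ℤ, rowSumNorm (stabPhi As Au k)) * K₂
        * (∑' k : ℤ, ‖ftil 0 (yhat k) k‖)
        / (1 - (∑' k : ℤ, rowSumNorm (stabPhi As Au k)) * K₁) ≤ s)
    -- the Picard sequence with (A1) the initial iterate in the s-ball
    (η : ℕ → ℤ → (Fin ns ⊕ Fin nu → ℝ))
    (hη0sum : Summable fun k : ℤ => ‖η 0 k‖)
    (hη0 : (∑' k : ℤ, ‖η 0 k‖) ≤ s)
    (hPicard : ∀ (m : ℕ) (k : ℤ), η (m+1) k = ∑' j : ℤ,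
      (stabPhi As Au (k - j)).mulVec
        (ftil (η m (j-1)) (yhat (j-1)) (j-1) - Atil.mulVec (η m (j-1)))) :
    -- every iterate stays in the s-ball
    (∀ m : ℕ, (Summable fun k : ℤ => ‖η m k‖) ∧ (∑' k : ℤ, ‖η m k‖) ≤ s) ∧
    -- pointwise Cauchy, hence pointwise convergent
    (∀ k : ℤ, CauchySeq fun m => η m k) ∧
    -- the limit is the unique fixed point in the s-ball
    (∃ ηlim : ℤ → (Fin ns ⊕ Fin nu → ℝ),
      (∀ k : ℤ, Filter.Tendsto (fun m => η m k) Filter.atTop (nhds (ηlim k))) ∧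
      (Summable fun k : ℤ => ‖ηlim k‖) ∧ (∑' k : ℤ, ‖ηlim k‖) ≤ s ∧
      (∀ k : ℤ, ηlim k = ∑' j : ℤ, (stabPhi As Au (k - j)).mulVec
        (ftil (ηlim (j-1)) (yhat (j-1)) (j-1) - Atil.mulVec (ηlim (j-1)))) ∧
      (∀ ζ : ℤ → (Fin ns ⊕ Fin nu → ℝ),
        (Summable fun k : ℤ => ‖ζ k‖) → (∑' k : ℤ, ‖ζ k‖) ≤ s →
        (∀ k : ℤ, ζ k = ∑' j : ℤ, (stabPhi As Au (k - j)).mulVec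
          (ftil (ζ (j-1)) (yhat (j-1)) (j-1) - Atil.mulVec (ζ (j-1)))) →
        ζ = ηlim)) := by
  set Φ := ∑' k, rowSumNorm (stabPhi As Au k)
  set F : ℤ → (Fin ns ⊕ Fin nu → ℝ) → Fin ns ⊕ Fin nu → ℝ :=
    fun j x => ftil x (yhat j) j - Atil *ᵥ x
  have hF_lip (j : ℤ) (x y) (hx : ‖x‖ ≤ s) (hy : ‖y‖ ≤ s) :
      ‖F j x - F j y‖ ≤ K₁ * ‖x - y‖ := by
    simpa using hLAL j x y (yhat j) (yhat j) hx hy (hfbnd j) (hfbnd j)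
  have hF_bound (j : ℤ) (x) (hx : ‖x‖ ≤ s) :
      ‖F j x‖ ≤ K₁ * ‖x‖ + K₂ * ‖ftil 0 (yhat j) j‖ := by
    obtain ⟨ydag, hydag⟩ := hdag j
    simpa [hydag] using
      hLAL j x 0 (yhat j) ydag hx (by simpa using hs.le) (hfbnd j) (by simpa [hydag] using hs.le)
  have hΦ : 0 ≤ Φ := tsum_nonneg fun _ => rowSumNorm_nonneg _
  have hradius : Φ * (K₁ * s + ∑' j, K₂ * ‖ftil 0 (yhat j) j‖) ≤ s := by
    rw [div_le_iff₀ (by linarith)] at hball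
    rw [tsum_mul_left]
    linarith
  have hcomp (u : ℤ → _) (hu : MemL1Ball s u) :=
    hu.comp_of_norm_le hK₁.le (hfsum.mul_left K₂) hF_bound
  obtain ⟨hiter, hcauchy, ηlim, htend, ⟨hlimS, hlim⟩, hfix, huniq⟩ :=
    picard_iteration_converges_of_contracting (mul_nonneg hΦ hK₁.le) (by linarith)
      (fun u hu => ((hcomp u hu).delayConv hφsum).mono hradius)
      (fun u v hu hv => by
        rw [delayConv_sub hφsum (hcomp u hu).1 (hcomp v hv).1, mul_assoc]
        exact (hu.comp_sub_comp hF_lip hv).delayConv hφsum)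
      ⟨hη0sum, hη0⟩ (fun m => funext (hPicard m))
  exact ⟨hiter, hcauchy, ηlim, htend, hlimS, hlim, hfix, fun ζ h1 h2 => huniq ζ ⟨h1, h2⟩⟩

/-- Relaxed sufficient conditions for convergence of the Picard iteration in stable
inversion: all iterates stay in the `s`-ball, the iteration is pointwise Cauchy, and
its pointwise limit is the unique solution of the fixed-point equation in the ball. -/
theorem picard_iteration_converges_uniquely
    (ns nu μ : ℕ) (hμ : 1 ≤ μ)
    (As : Matrix (Fin ns) (Fin ns) ℝ) (Au : Matrix (Fin nu) (Fin nu) ℝ)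
    (hAu : IsUnit Au.det)
    (Atil : Matrix (Fin ns ⊕ Fin nu) (Fin ns ⊕ Fin nu) ℝ)
    (hAtil : Atil = Matrix.fromBlocks As 0 0 Au)
    (ftil : (Fin ns ⊕ Fin nu → ℝ) → (Fin (μ+1) → ℝ) → ℤ → (Fin ns ⊕ Fin nu → ℝ))
    (yhat : ℤ → (Fin (μ+1) → ℝ))
    (s K₁ K₂ : ℝ) (hs : 0 < s) (hK₁ : 0 < K₁) (hK₂ : 0 < K₂)
    -- (A2) for every k there is ŷ†(k) with f̃(0, ŷ†(k), k) = 0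
    (hdag : ∀ k : ℤ, ∃ ydag : Fin (μ+1) → ℝ, ftil 0 ydag k = 0)
    -- (A3) local approximate linearity on the closed s-neighborhood
    (hLAL : ∀ (k : ℤ) (a b : Fin ns ⊕ Fin nu → ℝ) (ya yb : Fin (μ+1) → ℝ),
      ‖a‖ ≤ s → ‖b‖ ≤ s → ‖ftil 0 ya k‖ ≤ s → ‖ftil 0 yb k‖ ≤ s →
      ‖(ftil a ya k - Atil.mulVec a) - (ftil b yb k - Atil.mulVec b)‖
        ≤ K₁ * ‖a - b‖ + K₂ * ‖ftil 0 ya k - ftil 0 yb k‖)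
    -- (A4) K₁‖φ‖_{∞,1} < 1 with ‖φ‖_{∞,1} < ∞
    (hφsum : Summable fun k : ℤ => rowSumNorm (stabPhi As Au k))
    (hcontr : K₁ * (∑' k : ℤ, rowSumNorm (stabPhi As Au k)) < 1)
    -- (A5) the ball condition
    (hfbnd : ∀ k : ℤ, ‖ftil 0 (yhat k) k‖ ≤ s)
    (hfsum : Summable fun k : ℤ => ‖ftil 0 (yhat k) k‖)
    (hball : (∑' k : ℤ, rowSumNorm (stabPhi As Au k)) * K₂
        * (∑' k : ℤ, ‖ftil 0 (yhat k) k‖)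
        / (1 - (∑' k : ℤ, rowSumNorm (stabPhi As Au k)) * K₁) ≤ s)
    -- the Picard sequence with (A1) the initial iterate in the s-ball
    (η : ℕ → ℤ → (Fin ns ⊕ Fin nu → ℝ))
    (hη0sum : Summable fun k : ℤ => ‖η 0 k‖)
    (hη0 : (∑' k : ℤ, ‖η 0 k‖) ≤ s)
    (hPicard : ∀ (m : ℕ) (k : ℤ), η (m+1) k = ∑' j : ℤ,
      (stabPhi As Au (k - j)).mulVec
        (ftil (η m (j-1)) (yhat (j-1)) (j-1) - Atil.mulVec (η m (j-1)))) :
    -- every iterate stays in the s-ball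
    (∀ m : ℕ, (Summable fun k : ℤ => ‖η m k‖) ∧ (∑' k : ℤ, ‖η m k‖) ≤ s) ∧
    -- pointwise Cauchy, hence pointwise convergent
    (∀ k : ℤ, CauchySeq fun m => η m k) ∧
    -- the limit is the unique fixed point in the s-ball
    (∃ ηlim : ℤ → (Fin ns ⊕ Fin nu → ℝ),
      (∀ k : ℤ, Filter.Tendsto (fun m => η m k) Filter.atTop (nhds (ηlim k))) ∧
      (Summable fun k : ℤ => ‖ηlim k‖) ∧ (∑' k : ℤ, ‖ηlim k‖) ≤ s ∧
      (∀ k : ℤ, ηlim k = ∑' j : ℤ, (stabPhi As Au (k - j)).mulVec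
        (ftil (ηlim (j-1)) (yhat (j-1)) (j-1) - Atil.mulVec (ηlim (j-1)))) ∧
      (∀ ζ : ℤ → (Fin ns ⊕ Fin nu → ℝ),
        (Summable fun k : ℤ => ‖ζ k‖) → (∑' k : ℤ, ‖ζ k‖) ≤ s →
        (∀ k : ℤ, ζ k = ∑' j : ℤ, (stabPhi As Au (k - j)).mulVec
          (ftil (ζ (j-1)) (yhat (j-1)) (j-1) - Atil.mulVec (ζ (j-1)))) →
        ζ = ηlim)) :=
  picard_iteration_converges_uniquely_general ns nu μ As Au Atil ftil yhat s K₁ K₂ hs hK₁ hdag hLAL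
    hφsum hcontr hfbnd hfsum hball η hη0sum hη0 hPicard
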